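/- Let q > 0, let a < b be real numbers with d(a,b;q^i) ≠ 0 for i = 0,…,n−1, and let B^n_k(·;q) denote the quantum trigonometric Bernstein basis functions of degree n on [a,b] (and B^{n−1}_k(·;q) those of degree n−1 on [a,b], with the conventions B^{n−1}_{−1} = 0 and B^{n−1}_n = 0). Then for every k with 0 ≤ k ≤ n and every real x, B^n_k(x;q) = (d(a,x;q^{k−1})/d(a,b;q^{n−1}))·B^{n−1}_{k−1}(x;q) + q^k·(d(x,b;q^{n−k−1})/d(a,b;q^{n−1}))·B^{n−1}_k(x;q). -/

import Mathlib

/-- `d(x,y;c) = ((c+1)/2)·sin(y−x) + ((c−1)/2)·sin(y+x)`. -/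
noncomputable def dq (x y c : ℝ) : ℝ :=
  (c + 1) / 2 * Real.sin (y - x) + (c - 1) / 2 * Real.sin (y + x)

/-- The q-integer `[k]_q = 1 + q + ⋯ + q^{k−1}`. -/
noncomputable def qInt (q : ℝ) (k : ℕ) : ℝ := ∑ i ∈ Finset.range k, q ^ i

/-- The q-factorial `[k]_q!`. -/
noncomputable def qFact (q : ℝ) : ℕ → ℝ
  | 0 => 1
  | k + 1 => qInt q (k + 1) * qFact q k

/-- The q-binomial coefficient `[n choose k]_q`. -/
noncomputable def qBinom (q : ℝ) (n k : ℕ) : ℝ :=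
  qFact q n / (qFact q k * qFact q (n - k))

/-- Quantum trigonometric Bernstein basis function `B^n_k(x;q)` on `[a,b]`. -/
noncomputable def qBern (q a b : ℝ) (n k : ℕ) (x : ℝ) : ℝ :=
  qBinom q n k *
    ((∏ i ∈ Finset.range k, dq a x (q ^ i)) * ∏ i ∈ Finset.range (n - k), dq x b (q ^ i)) /
    ∏ i ∈ Finset.range n, dq a b (q ^ i)

/-- A matrix is totally positive if all its minors are nonnegative. -/
def IsTotallyPositive {p r : ℕ} (M : Matrix (Fin p) (Fin r) ℝ) : Prop :=
  ∀ (k : ℕ) (f : Fin k → Fin p) (g : Fin k → Fin r),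
    StrictMono f → StrictMono g → 0 ≤ (M.submatrix f g).det

/-- A system of functions is totally positive on `I` if all its collocation matrices at
increasing points of `I` are totally positive. -/
def IsTotallyPositiveSystem (I : Set ℝ) {n : ℕ} (φ : Fin n → ℝ → ℝ) : Prop :=
  ∀ (m : ℕ) (x : Fin (m + 1) → ℝ), StrictMono x → (∀ j, x j ∈ I) →
    IsTotallyPositive (Matrix.of fun i j => φ i (x j))

/-- Number of sign changes between consecutive entries of a list. -/
noncomputable def signChanges : List ℝ → ℕ
  | [] => 0
  | [_] => 0
  | a :: b :: t => (if a * b < 0 then 1 else 0) + signChanges (b :: t)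

/-- `S⁻(v)`: the number of strict sign changes of a finite real sequence, i.e. the number
of sign changes after deleting all zero entries. -/
noncomputable def strictSignChanges (v : List ℝ) : ℕ :=
  signChanges (v.filter fun x => x ≠ 0)

/-- Rational quantum trigonometric Bernstein basis function `R^n_k(x;q)` with weights `w`. -/
noncomputable def rqBern (q a b : ℝ) (n : ℕ) (w : Fin (n + 1) → ℝ) (k : Fin (n + 1)) (x : ℝ) : ℝ :=
  w k * qBern q a b n k x / ∑ i : Fin (n + 1), w i * qBern q a b n i x


lemma qInt_pos {q : ℝ} (hq : 0 < q) {k : ℕ} (hk : 0 < k) : 0 < qInt q k := by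
  unfold qInt
  exact Finset.sum_pos (fun i _ => pow_pos hq i) (Finset.nonempty_range_iff.mpr hk.ne')

lemma qFact_pos {q : ℝ} (hq : 0 < q) : ∀ k, 0 < qFact q k
  | 0 => by simp [qFact]
  | (k+1) => by
    rw [qFact]
    exact mul_pos (qInt_pos hq k.succ_pos) (qFact_pos hq k)

lemma qInt_add (q : ℝ) (k m : ℕ) : qInt q (k + m) = qInt q k + q ^ k * qInt q m := by
  unfold qInt
  rw [Finset.sum_range_add, Finset.mul_sum]
  simp [pow_add]

lemma qFact_succ (q : ℝ) (k : ℕ) : qFact q (k + 1) = qInt q (k + 1) * qFact q k := rfl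

lemma qPascal {q : ℝ} (hq : 0 < q) {n k : ℕ} (h : k + 1 ≤ n) :
    qBinom q (n + 1) (k + 1) = qBinom q n k + q ^ (k + 1) * qBinom q n (k + 1) := by
  have hnk : n - k = (n - (k + 1)) + 1 := by omega
  have e1 : qInt q (n + 1) = qInt q (k + 1) + q ^ (k + 1) * qInt q (n - k) := by
    rw [show n + 1 = (k + 1) + (n - k) by omega, qInt_add]
  unfold qBinom
  rw [Nat.succ_sub_succ, qFact_succ, e1, hnk, qFact_succ, qFact_succ]
  have h1 := (qFact_pos hq k).ne'
  have h2 := (qFact_pos hq (n - (k+1))).ne'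
  have h3 := (qInt_pos hq (Nat.succ_pos k)).ne'
  have h4 := (qInt_pos hq (Nat.succ_pos (n - (k+1)))).ne'
  field_simp

/-- Recurrence relation (8) for quantum trigonometric Bernstein basis functions, with the
conventions `B^{n-1}_{-1} = 0` and `B^{n-1}_n = 0`. -/
theorem qBern_recurrence_two (n : ℕ) (hn : 1 ≤ n) (q a b : ℝ) (hq : 0 < q) (hab : a < b)
    (hd : ∀ i < n, dq a b (q ^ i) ≠ 0) (k : ℕ) (hk : k ≤ n) (x : ℝ) :
    qBern q a b n k x =
      dq a x (q ^ ((k : ℤ) - 1)) / dq a b (q ^ ((n : ℤ) - 1)) *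
        (if k = 0 then 0 else qBern q a b (n - 1) (k - 1) x) +
      q ^ k * (dq x b (q ^ ((n : ℤ) - (k : ℤ) - 1)) / dq a b (q ^ ((n : ℤ) - 1))) *
        (if k = n then 0 else qBern q a b (n - 1) k x) := by
  have hqne : q ≠ 0 := hq.ne'
  obtain ⟨m, rfl⟩ : ∃ m, n = m + 1 := ⟨n - 1, by omega⟩
  have hdm : dq a b (q ^ m) ≠ 0 := hd m (by omega)
  have hDm : (∏ i ∈ Finset.range m, dq a b (q ^ i)) ≠ 0 :=
    Finset.prod_ne_zero_iff.mpr fun i hi => hd i (by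
      have := Finset.mem_range.mp hi; omega)
  have eN : (q : ℝ) ^ (((m + 1 : ℕ) : ℤ) - 1) = q ^ m := by
    rw [show ((m + 1 : ℕ) : ℤ) - 1 = (m : ℤ) by push_cast; ring, zpow_natCast]
  rcases eq_or_ne k 0 with rfl | hk0
  · simp only [if_pos rfl, mul_zero, zero_add, pow_zero, one_mul, Nat.cast_zero, sub_zero, if_true,
      if_neg (by omega : ¬ (0 : ℕ) = m + 1), eN]
    unfold qBern qBinom
    simp only [Nat.sub_zero, Nat.add_sub_cancel, Finset.range_zero, Finset.prod_empty, one_mul,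
      Finset.prod_range_succ]
    have h1 := (qFact_pos hq (m + 1)).ne'
    have h2 := (qFact_pos hq m).ne'
    rw [show qFact q 0 = 1 from rfl]
    field_simp
  · rcases eq_or_ne k (m + 1) with rfl | hkn
    · simp only [if_pos rfl, if_true, mul_zero, add_zero, if_neg hk0, eN, Nat.add_sub_cancel]
      have eK : (q : ℝ) ^ (((m + 1 : ℕ) : ℤ) - 1) = q ^ m := eN
      unfold qBern qBinom
      simp only [Nat.sub_self, Finset.range_zero, Finset.prod_empty, mul_one,
        Nat.add_sub_cancel, Finset.prod_range_succ]
      have h1 := (qFact_pos hq (m + 1)).ne'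
      have h2 := (qFact_pos hq m).ne'
      rw [show qFact q 0 = 1 from rfl]
      field_simp
    · obtain ⟨j, rfl⟩ : ∃ j, k = j + 1 := ⟨k - 1, by omega⟩
      have hjm : j + 1 ≤ m := by omega
      have eK : (q : ℝ) ^ (((j + 1 : ℕ) : ℤ) - 1) = q ^ j := by
        rw [show ((j + 1 : ℕ) : ℤ) - 1 = (j : ℤ) by push_cast; ring, zpow_natCast]
      have eB : (q : ℝ) ^ (((m + 1 : ℕ) : ℤ) - ((j + 1 : ℕ) : ℤ) - 1) = q ^ (m - j - 1) := by
        rw [show ((m + 1 : ℕ) : ℤ) - ((j + 1 : ℕ) : ℤ) - 1 = ((m - j - 1 : ℕ) : ℤ) by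
          push_cast [Nat.cast_sub (by omega : j + 1 ≤ m)]; omega, zpow_natCast]
      simp only [if_neg hk0, if_neg hkn, eN, eK, eB, Nat.add_sub_cancel]
      unfold qBern
      rw [show m + 1 - (j + 1) = (m - (j + 1)) + 1 by omega,
        show m - j - 1 = m - (j + 1) by omega,
        show m - j = (m - (j + 1)) + 1 by omega, qPascal hq hjm,
        Finset.prod_range_succ, Finset.prod_range_succ,
        show (∏ i ∈ Finset.range (m + 1), dq a b (q ^ i)) =
          (∏ i ∈ Finset.range m, dq a b (q ^ i)) * dq a b (q ^ m) from
          Finset.prod_range_succ _ _]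
      field_simp
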